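/- arXiv:1704.02585 — 2 statements merged into one kernel-verified Lean document; each statement's English description precedes it below -/
import Mathlib

section
/- (Dual Sylvester identity) Let X be a matrix, K and K' sequences of row and column indices of equal length, and J = (j_1,…,j_q), J' = (j'_1,…,j'_q) sequences of row and column indices. Then det( det X((J∖(j_α))⊔K ; (J'∖(j'_β))⊔K') )_{1≤α,β≤q} = (det X(J⊔K ; J'⊔K'))^{q−1} · det X(K ; K'). -/
/-!
Write `Y` for the `(q + 1 + r)`-square matrix `X(J ⊔ K ; J' ⊔ K')`, indexed by
`Fin (q + 1) ⊕ Fin r`. By cofactor expansion, the minor of `Y` obtained by deleting row `α` and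
column `β` of the first block is `(-1)^(α+β) adj(Y)_{βα}`, so the matrix of minors is the
transposed `(q + 1)`-block of `adj Y`, conjugated by a diagonal sign matrix. Jacobi's
complementary minor theorem computes the determinant of that block as `det Y ^ q · det Y(K ; K')`:
multiplying `Y` by the block lower triangular matrix whose first block column is the first block
column of `adj Y` and whose last diagonal block is `1` gives an upper triangular matrix with
diagonal blocks `det Y • 1` and `Y(K ; K')`, and the resulting factor `det Y` is cancelled for the
generic matrix over `ℤ[x_ij]`, where the determinant is not a zero divisor.
-/

open Matrix Finset

theorem Fin.cast_finSumFinEquiv_sumMap_succAbove {q r : ℕ} (h : q + 1 + r = q + r + 1)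
    (γ : Fin (q + 1)) (x : Fin q ⊕ Fin r) :
    Fin.cast h (finSumFinEquiv (Sum.map γ.succAbove id x)) =
      (Fin.cast h (Fin.castAdd r γ)).succAbove (finSumFinEquiv x) := by
  rcases x with x | x <;> ext <;> simp [Fin.succAbove, Fin.lt_def] <;> split_ifs <;> simp <;> omega

namespace Matrix

variable {R : Type*} [CommRing R]

theorem det_submatrix_finAppend {ι κ : Type*} (X : Matrix ι κ R) {m n : ℕ}
    (I : Fin m → ι) (K : Fin n → ι) (I' : Fin m → κ) (K' : Fin n → κ) :
    (X.submatrix (Fin.append I K) (Fin.append I' K')).det =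
      (X.submatrix (Sum.elim I K) (Sum.elim I' K')).det := by
  rw [← Fin.append_comp_sumElim (xs := I), ← Fin.append_comp_sumElim (xs := I'),
    ← submatrix_submatrix]
  exact (det_submatrix_equiv_self finSumFinEquiv _).symm

variable {m n : Type*} [Fintype m] [Fintype n] [DecidableEq m] [DecidableEq n]

theorem det_mul_det_adjugate_submatrix_inl (A : Matrix (m ⊕ n) (m ⊕ n) R) :
    A.det * (A.adjugate.submatrix Sum.inl Sum.inl).det =
      A.det ^ Fintype.card m * (A.submatrix Sum.inr Sum.inr).det := by
  set B := A.adjugate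
  have hmul : A * fromBlocks (B.submatrix Sum.inl Sum.inl) 0 (B.submatrix Sum.inr Sum.inl) 1 =
      fromBlocks (A.det • 1) (A.submatrix Sum.inl Sum.inr) 0 (A.submatrix Sum.inr Sum.inr) := by
    ext (i | i) (j | j) <;> simp [mul_apply, Fintype.sum_sum_type, one_apply]
    · simpa [mul_apply, Fintype.sum_sum_type, one_apply] using
        congr_fun₂ A.mul_adjugate (.inl i) (.inl j)
    · simpa [mul_apply, Fintype.sum_sum_type, one_apply] using
        congr_fun₂ A.mul_adjugate (.inr i) (.inl j)
  calc A.det * (B.submatrix Sum.inl Sum.inl).det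
      = (A * fromBlocks (B.submatrix Sum.inl Sum.inl) 0 (B.submatrix Sum.inr Sum.inl) 1).det := by
        rw [det_mul, det_fromBlocks_zero₁₂, det_one, mul_one]
    _ = A.det ^ Fintype.card m * (A.submatrix Sum.inr Sum.inr).det := by
        rw [hmul, det_fromBlocks_zero₂₁, det_smul, det_one, mul_one]

theorem det_adjugate_submatrix_inl {q : ℕ} (hm : Fintype.card m = q + 1)
    (A : Matrix (m ⊕ n) (m ⊕ n) R) :
    (A.adjugate.submatrix Sum.inl Sum.inl).det =
      A.det ^ q * (A.submatrix Sum.inr Sum.inr).det := by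
  let A' := mvPolynomialX (m ⊕ n) (m ⊕ n) ℤ
  suffices (A'.adjugate.submatrix Sum.inl Sum.inl).det =
      A'.det ^ q * (A'.submatrix Sum.inr Sum.inr).det by
    have := congrArg (MvPolynomial.aeval fun p : (m ⊕ n) × (m ⊕ n) => A p.1 p.2) this
    rw [← mvPolynomialX_mapMatrix_aeval ℤ A, ← AlgHom.map_adjugate]
    simpa [AlgHom.map_det, submatrix_map] using this
  apply mul_left_cancel₀ (det_mvPolynomialX_ne_zero (m ⊕ n) ℤ)
  rw [det_mul_det_adjugate_submatrix_inl, hm]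
  ring

theorem det_submatrix_sumMap_succAbove {q r : ℕ}
    (A : Matrix (Fin (q + 1) ⊕ Fin r) (Fin (q + 1) ⊕ Fin r) R) (α β : Fin (q + 1)) :
    (A.submatrix (Sum.map α.succAbove id) (Sum.map β.succAbove id)).det =
      (-1) ^ (α + β : ℕ) * A.adjugate (Sum.inl β) (Sum.inl α) := by
  let e := finSumFinEquiv.trans (finCongr (by omega : q + 1 + r = q + r + 1))
  have he : ∀ γ : Fin (q + 1),
      e ∘ Sum.map γ.succAbove id = (e (.inl γ)).succAbove ∘ finSumFinEquiv :=
    fun γ => funext (Fin.cast_finSumFinEquiv_sumMap_succAbove (by omega) γ)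
  obtain ⟨Z, rfl⟩ : ∃ Z, A = Z.submatrix e e := ⟨A.submatrix e.symm e.symm, by simp⟩
  rw [adjugate_submatrix_equiv_self, submatrix_apply, adjugate_fin_succ_eq_det_submatrix,
    submatrix_submatrix, he, he, ← submatrix_submatrix, det_submatrix_equiv_self]
  simp [e, ← mul_assoc, ← pow_add]

theorem det_of_det_submatrix_sumMap_succAbove {q r : ℕ}
    (A : Matrix (Fin (q + 1) ⊕ Fin r) (Fin (q + 1) ⊕ Fin r) R) :
    (of fun α β : Fin (q + 1) =>
        (A.submatrix (Sum.map α.succAbove id) (Sum.map β.succAbove id)).det).det =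
      A.det ^ q * (A.submatrix Sum.inr Sum.inr).det := by
  let S : Matrix (Fin (q + 1)) (Fin (q + 1)) R := diagonal fun α => (-1) ^ (α : ℕ)
  have hS : S.det * S.det = 1 := by
    simp [S, det_diagonal, ← mul_pow, prod_pow_eq_pow_sum]
  have hminors : (of fun α β : Fin (q + 1) =>
      (A.submatrix (Sum.map α.succAbove id) (Sum.map β.succAbove id)).det) =
      S * (A.adjugate.submatrix Sum.inl Sum.inl)ᵀ * S := by
    ext α β
    simp [S, det_submatrix_sumMap_succAbove, pow_add]
    ring
  rw [hminors, det_mul, det_mul, det_transpose, mul_right_comm, hS, one_mul,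
    det_adjugate_submatrix_inl (Fintype.card_fin _)]

end Matrix

/-- Dual Sylvester identity: for sequences `J, J'` of length `q ≥ 1` (written `q + 1` below
with exponent `q = (q+1) − 1`),
`det ( det X((J∖(j_α))⊔K ; (J'∖(j'_β))⊔K') )_{α,β}
  = (det X(J⊔K ; J'⊔K'))^{q−1} · det X(K ; K')`. -/
theorem dual_sylvester {R : Type*} [CommRing R] {ι κ : Type*} (X : Matrix ι κ R)
    {q r : ℕ} (K : Fin r → ι) (K' : Fin r → κ)
    (J : Fin (q + 1) → ι) (J' : Fin (q + 1) → κ) :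
    (Matrix.of fun α β : Fin (q + 1) =>
        (X.submatrix (Fin.append (J ∘ α.succAbove) K)
          (Fin.append (J' ∘ β.succAbove) K')).det).det
      = (X.submatrix (Fin.append J K) (Fin.append J' K')).det ^ q *
          (X.submatrix K K').det := by
  have hminor : ∀ α β : Fin (q + 1),
      (X.submatrix (Fin.append (J ∘ α.succAbove) K) (Fin.append (J' ∘ β.succAbove) K')).det =
        ((X.submatrix (Sum.elim J K) (Sum.elim J' K')).submatrix
          (Sum.map α.succAbove id) (Sum.map β.succAbove id)).det := by
    intro α β
    rw [det_submatrix_finAppend, submatrix_submatrix, Sum.elim_comp_map, Sum.elim_comp_map,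
      Function.comp_id, Function.comp_id]
  simp_rw [hminor, det_submatrix_finAppend]
  exact det_of_det_submatrix_sumMap_succAbove _
end

section
/- Let N be an n×n skew-symmetric matrix and M an m×n matrix with m+n even. Then the Pfaffian of the block skew-symmetric matrix [[N, M],[−Mᵀ, O]] equals (−1)^{C(m,2)} det M if m = n, and equals 0 if m > n. -/
open Matrix Finset

variable {R : Type*} [CommRing R]

/-- The index `2i` among `Fin n` (for `n` even, `i < n/2`). -/
def pfLo {n : ℕ} (_h : n % 2 = 0) (i : Fin (n / 2)) : Fin n :=
  ⟨2 * i.val, by have := i.isLt; omega⟩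

/-- The index `2i+1` among `Fin n` (for `n` even, `i < n/2`). -/
def pfHi {n : ℕ} (_h : n % 2 = 0) (i : Fin (n / 2)) : Fin n :=
  ⟨2 * i.val + 1, by have := i.isLt; omega⟩

/-- The Pfaffian of an `n × n` matrix, as the sum
`∑_{π ∈ F_n} sgn(π) · a_{π(1),π(2)} ⋯ a_{π(n−1),π(n)}` over the set `F_n` of permutations
satisfying `π(1) < π(3) < ⋯ < π(n−1)` and `π(2i−1) < π(2i)`; it is `0` when `n` is odd. -/
def pf {n : ℕ} (A : Matrix (Fin n) (Fin n) R) : R :=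
  if h : n % 2 = 0 then
    ∑ π : Equiv.Perm (Fin n),
      if (∀ i : Fin (n / 2), π (pfLo h i) < π (pfHi h i)) ∧
          (∀ i j : Fin (n / 2), i < j → π (pfLo h i) < π (pfLo h j)) then
        ((Equiv.Perm.sign π : ℤ) : R) * ∏ i : Fin (n / 2), A (π (pfLo h i)) (π (pfHi h i))
      else 0
  else 0

/-! Because the lower-right `m × m` block vanishes, a nonzero term of the Pfaffian expansion has
every pair `(π(2i), π(2i+1))` meeting the first `n` indices, and as `π(2i) < π(2i+1)` it is
`π(2i)` that does. The `π(2i)` increase with `i`, so there are at most `n` pairs, i.e. `m ≤ n`.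
When `m = n` they must be `π(2i) = i`, so `π` is the riffle `2i ↦ i, 2i+1 ↦ m + τ(i)` of a
permutation `τ`; its term is `(-1)^{C(m,2)} sgn τ ∏ M(τ i, i)`, and these sum to the determinant. -/

namespace Pfaffian

open Equiv

def finSumPerm {a b c : ℕ} (h : a + b = c) (σ : Perm (Fin a)) (ρ : Perm (Fin b)) :
    Perm (Fin c) :=
  permCongr (finSumFinEquiv.trans (finCongr h)) (sumCongr σ ρ)

lemma sign_finSumPerm {a b c : ℕ} (h : a + b = c) (σ : Perm (Fin a)) (ρ : Perm (Fin b)) :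
    Perm.sign (finSumPerm h σ ρ) = Perm.sign σ * Perm.sign ρ := by
  rw [finSumPerm, Perm.sign_permCongr, Perm.sign_sumCongr]

lemma finSumPerm_apply_val {a b c : ℕ} (h : a + b = c) (σ : Perm (Fin a)) (ρ : Perm (Fin b))
    (x : Fin c) :
    (finSumPerm h σ ρ x : ℕ) =
      if hx : (x : ℕ) < a then (σ ⟨x, hx⟩ : ℕ) else a + ρ ⟨x - a, by omega⟩ := by
  obtain ⟨y, rfl⟩ := (finSumFinEquiv.trans (finCongr h)).surjective x
  rcases y with y | y <;> simp [finSumPerm, permCongr_apply]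

def interleave (n : ℕ) : Fin n ⊕ Fin n ≃ Fin (n + n) where
  toFun := Sum.elim (fun i => ⟨2 * i, by omega⟩) (fun i => ⟨2 * i + 1, by omega⟩)
  invFun k := if (k : ℕ) % 2 = 0 then .inl ⟨k / 2, by omega⟩ else .inr ⟨k / 2, by omega⟩
  left_inv := by
    rintro (i | i)
    · simp
    · simp [Fin.ext_iff]
      omega
  right_inv k := by
    by_cases hk : (k : ℕ) % 2 = 0 <;> simp [hk] <;> ext <;> simp <;> omega

@[simp] lemma interleave_inl_val {n : ℕ} (i : Fin n) : (interleave n (.inl i) : ℕ) = 2 * i := rfl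

@[simp] lemma interleave_inr_val {n : ℕ} (i : Fin n) :
    (interleave n (.inr i) : ℕ) = 2 * i + 1 := rfl

def riffle {n : ℕ} (τ : Perm (Fin n)) : Perm (Fin (n + n)) :=
  (interleave n).symm.trans ((sumCongr 1 τ).trans finSumFinEquiv)

@[simp] lemma riffle_interleave_inl {n : ℕ} (τ : Perm (Fin n)) (i : Fin n) :
    riffle τ (interleave n (.inl i)) = Fin.castAdd n i := by
  simp [riffle]

@[simp] lemma riffle_interleave_inr {n : ℕ} (τ : Perm (Fin n)) (i : Fin n) :
    riffle τ (interleave n (.inr i)) = Fin.natAdd n (τ i) := by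
  simp [riffle]

lemma riffle_one_apply_val {n : ℕ} (k : Fin (n + n)) :
    (riffle (1 : Perm (Fin n)) k : ℕ) = if (k : ℕ) % 2 = 0 then (k : ℕ) / 2 else n + k / 2 := by
  obtain ⟨i | i, rfl⟩ := (interleave n).surjective k <;> simp; omega

/-- To riffle `n + 1` pairs, riffle the first `n`, then rotate index `2n` down to position `n`. -/
lemma riffle_one_succ (n : ℕ) :
    riffle (1 : Perm (Fin (n + 1))) =
      finSumPerm (by omega) (1 : Perm (Fin n)) (Fin.cycleRange (Fin.last n).castSucc) *
        finSumPerm (by omega) (riffle (1 : Perm (Fin n))) (1 : Perm (Fin 2)) := by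
  ext x
  have hcycle (j : Fin (n + 2)) : (Fin.cycleRange (Fin.last n).castSucc j : ℕ) =
      if (j : ℕ) < n then (j : ℕ) + 1 else if (j : ℕ) = n then 0 else (j : ℕ) := by
    rcases lt_trichotomy (j : ℕ) n with hj | hj | hj
    · simp [Fin.coe_cycleRange_of_lt (show j < (Fin.last n).castSucc from hj), hj]
    · simp [Fin.cycleRange_of_eq (show j = (Fin.last n).castSucc from Fin.ext hj), hj]
    · simp [Fin.cycleRange_of_gt (show (Fin.last n).castSucc < j from hj), hj.ne', hj.not_gt]
  simp only [Perm.mul_apply, finSumPerm_apply_val, riffle_one_apply_val, hcycle, Perm.one_apply]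
  split_ifs <;> omega

lemma sign_riffle_one (n : ℕ) : Perm.sign (riffle (1 : Perm (Fin n))) = (-1) ^ n.choose 2 := by
  induction n with
  | zero => rw [show riffle (1 : Perm (Fin 0)) = 1 from Equiv.ext fun x => x.elim0]; simp
  | succ n ih =>
    rw [riffle_one_succ, map_mul, sign_finSumPerm, sign_finSumPerm, ih, Fin.sign_cycleRange,
      Nat.choose_succ_succ, Nat.choose_one_right]
    simp [pow_add, mul_comm]

lemma riffle_eq_riffle_one_mul {n : ℕ} (τ : Perm (Fin n)) :
    riffle τ = riffle 1 * permCongr (interleave n) (sumCongr 1 τ) := by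
  ext x
  simp [riffle, permCongr_apply]

lemma sign_riffle {n : ℕ} (τ : Perm (Fin n)) :
    Perm.sign (riffle τ) = (-1) ^ n.choose 2 * Perm.sign τ := by
  rw [riffle_eq_riffle_one_mul, map_mul, sign_riffle_one, Perm.sign_permCongr,
    Perm.sign_sumCongr, Perm.sign_one, one_mul]

lemma riffle_injective {n : ℕ} : Function.Injective (riffle (n := n)) := fun τ τ' h =>
  Equiv.ext fun i => by simpa using congrArg (· (interleave n (.inr i))) h

section Terms

variable {k : ℕ}

def pfTerm (h : k % 2 = 0) (A : Matrix (Fin k) (Fin k) R) (π : Perm (Fin k)) : R :=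
  if (∀ i : Fin (k / 2), π (pfLo h i) < π (pfHi h i)) ∧
      (∀ i j : Fin (k / 2), i < j → π (pfLo h i) < π (pfLo h j)) then
    ((Perm.sign π : ℤ) : R) * ∏ i : Fin (k / 2), A (π (pfLo h i)) (π (pfHi h i))
  else 0

lemma pf_eq_sum_pfTerm (h : k % 2 = 0) (A : Matrix (Fin k) (Fin k) R) :
    pf A = ∑ π, pfTerm h A π :=
  dif_pos h

lemma conditions_of_pfTerm_ne_zero {h : k % 2 = 0} {A : Matrix (Fin k) (Fin k) R}
    {π : Perm (Fin k)} (hπ : pfTerm h A π ≠ 0) :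
    (∀ i, π (pfLo h i) < π (pfHi h i)) ∧ StrictMono (fun i => π (pfLo h i)) ∧
      ∀ i, A (π (pfLo h i)) (π (pfHi h i)) ≠ 0 := by
  unfold pfTerm at hπ
  split_ifs at hπ with hcond
  · exact ⟨hcond.1, hcond.2, fun i hi => hπ (by rw [prod_eq_zero (mem_univ i) hi, mul_zero])⟩
  · exact absurd rfl hπ

lemma pfLo_lt_of_pfTerm_ne_zero {n : ℕ} {h : k % 2 = 0} {A : Matrix (Fin k) (Fin k) R}
    (hA : ∀ x y : Fin k, n ≤ (x : ℕ) → n ≤ (y : ℕ) → A x y = 0) {π : Perm (Fin k)}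
    (hπ : pfTerm h A π ≠ 0) (i : Fin (k / 2)) : (π (pfLo h i) : ℕ) < n := by
  obtain ⟨hlt, -, hne⟩ := conditions_of_pfTerm_ne_zero hπ
  by_contra hle
  have := Fin.lt_def.1 (hlt i)
  exact hne i (hA _ _ (by omega) (by omega))

theorem pf_eq_zero_of_lowerRight_eq_zero {n : ℕ} {A : Matrix (Fin k) (Fin k) R}
    (hk : 2 * n < k) (hA : ∀ x y : Fin k, n ≤ (x : ℕ) → n ≤ (y : ℕ) → A x y = 0) : pf A = 0 := by
  by_cases h : k % 2 = 0
  swap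
  · exact dif_neg h
  rw [pf_eq_sum_pfTerm h]
  refine sum_eq_zero fun π _ => ?_
  by_contra hπ
  let lo : Fin (k / 2) → Fin n := fun i => ⟨π (pfLo h i), pfLo_lt_of_pfTerm_ne_zero hA hπ i⟩
  have hlo : StrictMono lo := fun i j hij => (conditions_of_pfTerm_ne_zero hπ).2.1 hij
  have := Fin.le_of_injective lo hlo.injective
  omega

end Terms

section Square

variable {m : ℕ}

lemma pfLo_cast (h : (m + m) % 2 = 0) (hm : m = (m + m) / 2) (j : Fin m) :
    pfLo h (Fin.cast hm j) = interleave m (.inl j) :=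
  rfl

lemma pfHi_cast (h : (m + m) % 2 = 0) (hm : m = (m + m) / 2) (j : Fin m) :
    pfHi h (Fin.cast hm j) = interleave m (.inr j) :=
  rfl

lemma exists_riffle_eq_of_pfTerm_ne_zero (h : (m + m) % 2 = 0)
    {A : Matrix (Fin (m + m)) (Fin (m + m)) R}
    (hA : ∀ x y : Fin (m + m), m ≤ (x : ℕ) → m ≤ (y : ℕ) → A x y = 0) {π : Perm (Fin (m + m))}
    (hπ : pfTerm h A π ≠ 0) : ∃ τ, riffle τ = π := by
  have hm : m = (m + m) / 2 := by omega
  have hlo (j : Fin m) : π (interleave m (.inl j)) = Fin.castAdd m j := by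
    let lo : Fin m → Fin m := fun j =>
      ⟨π (pfLo h (Fin.cast hm j)), pfLo_lt_of_pfTerm_ne_zero hA hπ _⟩
    have hmono : StrictMono lo := fun a b hab => (conditions_of_pfTerm_ne_zero hπ).2.1 hab
    exact Fin.ext (congrArg Fin.val (hmono.apply_eq (x := j)) :)
  let σ : Perm (Fin m ⊕ Fin m) := ((interleave m).trans π).trans finSumFinEquiv.symm
  have hσ : Set.MapsTo σ (Set.range .inl) (Set.range .inl) := by
    rintro _ ⟨j, rfl⟩
    exact ⟨j, by simp [σ, hlo]⟩
  obtain ⟨⟨_, τ⟩, hτ⟩ := Perm.mem_sumCongrHom_range_of_perm_mapsTo_inl hσ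
  refine ⟨τ, Equiv.ext fun x => ?_⟩
  obtain ⟨j | j, rfl⟩ := (interleave m).surjective x
  · simp [hlo]
  · rw [riffle_interleave_inr, ← finSumFinEquiv_apply_right, ← Equiv.eq_symm_apply]
    simpa [σ] using congrArg (· (Sum.inr j)) hτ

lemma pfTerm_riffle (h : (m + m) % 2 = 0) (A : Matrix (Fin (m + m)) (Fin (m + m)) R)
    (τ : Perm (Fin m)) :
    pfTerm h A (riffle τ) =
      (-1) ^ m.choose 2 * Perm.sign τ * ∏ j, A (Fin.castAdd m j) (Fin.natAdd m (τ j)) := by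
  have hm : m = (m + m) / 2 := by omega
  have hcond : (∀ i : Fin ((m + m) / 2), riffle τ (pfLo h i) < riffle τ (pfHi h i)) ∧
      (∀ i j : Fin ((m + m) / 2), i < j → riffle τ (pfLo h i) < riffle τ (pfLo h j)) := by
    refine ⟨fun i => ?_, fun i i' hii' => ?_⟩
    · obtain ⟨j, rfl⟩ := (finCongr hm).surjective i
      simp [pfLo_cast, pfHi_cast, Fin.lt_def]
      omega
    · obtain ⟨j, rfl⟩ := (finCongr hm).surjective i
      obtain ⟨j', rfl⟩ := (finCongr hm).surjective i'
      simp only [finCongr_apply, pfLo_cast, riffle_interleave_inl]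
      exact hii'
  rw [pfTerm, if_pos hcond, sign_riffle, ← Fin.prod_congr' _ hm]
  simp [pfLo_cast, pfHi_cast]

theorem pf_eq_det_of_lowerRight_eq_zero {A : Matrix (Fin (m + m)) (Fin (m + m)) R}
    (hA : ∀ x y : Fin (m + m), m ≤ (x : ℕ) → m ≤ (y : ℕ) → A x y = 0) :
    pf A =
      (-1) ^ m.choose 2 * (Matrix.of fun i j => A (Fin.castAdd m i) (Fin.natAdd m j)).det := by
  have h : (m + m) % 2 = 0 := by omega
  rw [pf_eq_sum_pfTerm h, ← det_transpose, det_apply, mul_sum]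
  symm
  refine Fintype.sum_of_injective riffle riffle_injective _ _ (fun π hπ => ?_) (fun τ => ?_)
  · by_contra hne
    exact hπ (exists_riffle_eq_of_pfTerm_ne_zero h hA hne)
  · rw [pfTerm_riffle]
    simp [Units.smul_def]
    ring

end Square

lemma fromBlocks_zero_submatrix_apply_of_le {n m : ℕ} (P : Matrix (Fin n) (Fin n) R)
    (Q : Matrix (Fin n) (Fin m) R) (S : Matrix (Fin m) (Fin n) R) (x y : Fin (n + m))
    (hx : n ≤ (x : ℕ)) (hy : n ≤ (y : ℕ)) :
    (fromBlocks P Q S 0).submatrix finSumFinEquiv.symm finSumFinEquiv.symm x y = 0 := by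
  induction x using Fin.addCases with
  | left x => exact absurd hx (by simp)
  | right x =>
    induction y using Fin.addCases with
    | left y => exact absurd hy (by simp)
    | right y => simp

end Pfaffian

open Pfaffian in
theorem pf_block_skew_diag_general {m n : ℕ}
    (N : Matrix (Fin n) (Fin n) R) (M : Matrix (Fin m) (Fin n) R) :
    (∀ h : m = n,
      pf ((Matrix.fromBlocks N Mᵀ (-M) 0).submatrix finSumFinEquiv.symm finSumFinEquiv.symm)
        = (-1 : R) ^ m.choose 2 * (M.submatrix (Fin.cast h.symm) id).det) ∧
    (m > n →
      pf ((Matrix.fromBlocks N Mᵀ (-M) 0).submatrix finSumFinEquiv.symm finSumFinEquiv.symm)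
        = 0) := by
  have hA := fromBlocks_zero_submatrix_apply_of_le N Mᵀ (-M)
  refine ⟨fun h => ?_, fun h => pf_eq_zero_of_lowerRight_eq_zero (by omega) hA⟩
  subst h
  rw [pf_eq_det_of_lowerRight_eq_zero hA, ← det_transpose]
  congr
  ext i j
  simp only [transpose_apply, of_apply, submatrix_apply, finSumFinEquiv_symm_apply_castAdd,
    finSumFinEquiv_symm_apply_natAdd, fromBlocks_apply₁₂, Fin.cast_eq_self, id]

/-- For an `n × n` skew-symmetric matrix `N` and an `m × n` matrix `M` with `m + n` even,
the Pfaffian of the block skew-symmetric matrix `[[N, M], [−Mᵀ, O]]` (with `O` the `m × m`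
zero block, so that the top-right block is the transpose copy of `M`) equals
`(−1)^{C(m,2)} det M` if `m = n`, and `0` if `m > n`. -/
theorem pf_block_skew_diag {m n : ℕ} (hmn : (m + n) % 2 = 0)
    (N : Matrix (Fin n) (Fin n) R) (hN : Nᵀ = -N) (M : Matrix (Fin m) (Fin n) R) :
    (∀ h : m = n,
      pf ((Matrix.fromBlocks N Mᵀ (-M) 0).submatrix finSumFinEquiv.symm finSumFinEquiv.symm)
        = (-1 : R) ^ m.choose 2 * (M.submatrix (Fin.cast h.symm) id).det) ∧
    (m > n →
      pf ((Matrix.fromBlocks N Mᵀ (-M) 0).submatrix finSumFinEquiv.symm finSumFinEquiv.symm)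
        = 0) :=
  pf_block_skew_diag_general N M
end
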